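/- arXiv:1401.1377 — 4 statements merged into one kernel-verified Lean document; each statement's English description precedes it below -/
import Mathlib

section
/- Let A = (a_{i,j}), i, j ∈ {0,1,2,…}, be an infinite matrix with entries from ℤ such that each row has only finitely many nonzero entries and there is a bound B ∈ ℕ with Σ_{j} |a_{i,j}| ≤ B for every row i (bounded row sums). If A is partition regular over ℕ, then there is a nonempty set J ⊆ {0,1,2,…} of column indices such that the columns indexed by J sum to the zero vector, i.e., for every row i, Σ_{j ∈ J} a_{i,j} = 0. -/
/-!
Take a prime `b > B` and colour `n` by its last nonzero digit in base `b`. A monochromatic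
solution `x` with common digit `t ≠ 0` satisfies, with `p` the least `b`-adic valuation among
the `x j` and `J` the columns where it is attained, `x j ≡ t * b ^ p` for `j ∈ J` and
`x j ≡ 0` otherwise, modulo `b ^ (p + 1)`. Each row equation then gives
`t * b ^ p * ∑_{j ∈ J} A i j ≡ 0`, so `b ∣ ∑_{j ∈ J} A i j`; as this sum has absolute
value at most `B < b`, it vanishes.
-/

open Function

namespace Nat

/-- For prime `b`, the last nonzero digit of `n` in base `b` (and `0` for `n = 0`). -/
def lastNonzeroDigit (b n : ℕ) : ℕ := ordCompl[b] n % b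

theorem lastNonzeroDigit_ne_zero {b n : ℕ} (hb : b.Prime) (hn : n ≠ 0) :
    lastNonzeroDigit b n ≠ 0 :=
  fun h => not_dvd_ordCompl hb hn (dvd_of_mod_eq_zero h)

theorem modEq_lastNonzeroDigit_mul_pow (b n : ℕ) :
    n ≡ lastNonzeroDigit b n * b ^ n.factorization b [MOD b ^ (n.factorization b + 1)] := by
  have h := (mod_modEq (ordCompl[b] n) b).symm.mul_left' (b ^ n.factorization b)
  rwa [ordProj_mul_ordCompl_eq_self, ← pow_succ, mul_comm] at h

end Nat

section RowEquation

variable {ι : Type*} {a x : ι → ℤ} {b t : ℤ} {p : ℕ} {J : Set ι}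

theorem prime_dvd_sum_filter_of_sum_mul_eq_zero [DecidablePred (· ∈ J)] {s : Finset ι}
    (hb : Prime b) (ht : ¬ b ∣ t)
    (hxJ : ∀ j ∈ J, x j ≡ t * b ^ p [ZMOD b ^ (p + 1)])
    (hxJc : ∀ j ∉ J, x j ≡ 0 [ZMOD b ^ (p + 1)])
    (hsum : ∑ j ∈ s, a j * x j = 0) :
    b ∣ ∑ j ∈ s with j ∈ J, a j := by
  set S := ∑ j ∈ s with j ∈ J, a j
  have hmod : 0 ≡ S * t * b ^ p [ZMOD b ^ (p + 1)] :=
    calc 0 = ∑ j ∈ s, a j * x j := hsum.symm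
      _ ≡ ∑ j ∈ s, if j ∈ J then a j * (t * b ^ p) else 0 [ZMOD b ^ (p + 1)] :=
        Int.ModEq.sum fun j _ => by
          split_ifs with hj
          · exact (hxJ j hj).mul_left _
          · simpa using (hxJc j hj).mul_left (a j)
      _ = S * t * b ^ p := by
        rw [← Finset.sum_filter, Finset.sum_mul, Finset.sum_mul]
        simp only [mul_assoc]
  have hdvd : b ^ p * b ∣ S * t * b ^ p := by
    rw [← pow_succ]
    exact Int.modEq_zero_iff_dvd.mp hmod.symm
  rw [mul_comm (b ^ p), mul_dvd_mul_iff_right (pow_ne_zero p hb.ne_zero)] at hdvd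
  exact (hb.dvd_or_dvd hdvd).resolve_right ht

theorem finsum_mem_eq_zero_of_finsum_mul_eq_zero (ha : HasFiniteSupport a)
    (hb : Prime b) (ht : ¬ b ∣ t)
    (hxJ : ∀ j ∈ J, x j ≡ t * b ^ p [ZMOD b ^ (p + 1)])
    (hxJc : ∀ j ∉ J, x j ≡ 0 [ZMOD b ^ (p + 1)])
    (habs : ∑ᶠ j, |a j| < b) (hsum : ∑ᶠ j, a j * x j = 0) :
    ∑ᶠ j ∈ J, a j = 0 := by
  classical
  set s := ha.toFinset
  have hs_mul : support (fun j => a j * x j) ⊆ s :=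
    (support_mul_subset_left a x).trans ha.coe_toFinset.superset
  have hs_abs : support (fun j => |a j|) ⊆ s :=
    fun j hj => ha.mem_toFinset.mpr (by simpa using hj)
  rw [finsum_eq_sum_of_support_subset _ hs_mul] at hsum
  rw [finsum_eq_sum_of_support_subset _ hs_abs] at habs
  rw [finsum_mem_eq_sum_filter a J ha]
  refine Int.eq_zero_of_abs_lt_dvd
    (prime_dvd_sum_filter_of_sum_mul_eq_zero hb ht hxJ hxJc hsum) ?_
  calc |∑ j ∈ s with j ∈ J, a j|
    _ ≤ ∑ j ∈ s with j ∈ J, |a j| := Finset.abs_sum_le_sum_abs _ _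
    _ ≤ ∑ j ∈ s, |a j| :=
      Finset.sum_le_sum_of_subset_of_nonneg (Finset.filter_subset _ _) fun j _ _ => abs_nonneg _
    _ < b := habs

end RowEquation

/-- If an infinite integer matrix `A` (rows and columns indexed by `ℕ`), each of whose
rows has finitely many nonzero entries and whose row sums of absolute values are
bounded by some `B ∈ ℕ`, is partition regular over the positive integers, then some
nonempty set `J` of columns sums to the zero vector. -/
theorem bounded_row_sums_columns_sum_zero
    (A : ℕ → ℕ → ℤ)
    (hfin : ∀ i : ℕ, {j : ℕ | A i j ≠ 0}.Finite)
    (B : ℕ)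
    (hbound : ∀ i : ℕ, (∑ᶠ j : ℕ, |A i j|) ≤ (B : ℤ))
    (hpr : ∀ (k : ℕ) (c : ℕ → Fin k),
      ∃ x : ℕ → ℕ,
        (∀ j, 0 < x j) ∧
        (∃ i₀ : Fin k, ∀ j, c (x j) = i₀) ∧
        (∀ i : ℕ, ∑ᶠ j : ℕ, A i j * (x j : ℤ) = 0)) :
    ∃ J : Set ℕ, J.Nonempty ∧ ∀ i : ℕ, ∑ᶠ j ∈ J, A i j = 0 := by
  obtain ⟨b, hBb, hb⟩ := Nat.exists_infinite_primes (B + 1)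
  obtain ⟨x, hx_pos, ⟨t, hx_digit⟩, hx_sol⟩ :=
    hpr b fun n => ⟨Nat.lastNonzeroDigit b n, Nat.mod_lt _ hb.pos⟩
  replace hx_digit (j) : Nat.lastNonzeroDigit b (x j) = t := congrArg Fin.val (hx_digit j)
  have ht : ¬ (b : ℤ) ∣ (t : ℕ) := by
    have ht₀ : (t : ℕ) ≠ 0 := hx_digit 0 ▸ Nat.lastNonzeroDigit_ne_zero hb (hx_pos 0).ne'
    exact Int.natCast_dvd_natCast.not.mpr
      (Nat.not_dvd_of_pos_of_lt (Nat.pos_of_ne_zero ht₀) t.isLt)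
  set v : ℕ → ℕ := fun j => (x j).factorization b
  set p := v (argmin v)
  have hxJ (j) (hj : v j = p) : (x j : ℤ) ≡ (t : ℕ) * b ^ p [ZMOD b ^ (p + 1)] := by
    have h := Nat.modEq_lastNonzeroDigit_mul_pow b (x j)
    rw [hx_digit j, show (x j).factorization b = p from hj] at h
    exact_mod_cast Int.natCast_modEq_iff.mpr h
  have hxJc (j) (hj : v j ≠ p) : (x j : ℤ) ≡ 0 [ZMOD b ^ (p + 1)] := by
    have hlt : p < v j := (argmin_le v j).lt_of_ne (Ne.symm hj)
    exact Int.modEq_zero_iff_dvd.mpr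
      (by exact_mod_cast (Nat.pow_dvd_pow b hlt).trans (Nat.ordProj_dvd (x j) b))
  exact ⟨{j | v j = p}, ⟨argmin v, rfl⟩, fun i =>
    finsum_mem_eq_zero_of_finsum_mul_eq_zero (hfin i) (Nat.prime_iff_prime_int.mp hb) ht
      hxJ hxJc (by have := hbound i; omega) (hx_sol i)⟩
end

section
/- For every integer t ≥ 2 there exists a function ν : {1, 2, …, t−1} → {0, 1, 2} such that whenever i, j ∈ {1, 2, …, t−1} and j ≡ 2i (mod t), one has ν(i) ≠ ν(j). -/
/-!
Doubling modulo `t` is the shift on the binary expansion of `i / t`. Colour `i` by the first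
binary digit and by the parity of the length of the leading run of equal digits. A shift
shortens that run by one, flipping the parity, unless the run has length one, in which case the
first digit flips. Using colour `0` for one parity and a colour recording the first digit for
the other separates both kinds of step.
-/

def doublingsToReach (t a : ℕ) : ℕ :=
  if a = 0 ∨ t ≤ a then 0 else doublingsToReach t (2 * a) + 1
termination_by t - a

theorem doublingsToReach_of_le {t a : ℕ} (h : t ≤ a) : doublingsToReach t a = 0 := by
  rw [doublingsToReach, if_pos (Or.inr h)]

theorem doublingsToReach_eq_succ {t a : ℕ} (ha : 0 < a) (hat : a < t) :
    doublingsToReach t a = doublingsToReach t (2 * a) + 1 := by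
  rw [doublingsToReach, if_neg (by omega)]

theorem doublingsToReach_eq_one {t a : ℕ} (ha : 0 < a) (hat : a < t) (h : t ≤ 2 * a) :
    doublingsToReach t a = 1 := by
  rw [doublingsToReach_eq_succ ha hat, doublingsToReach_of_le h]

def parityColour (b : Bool) (n : ℕ) : Fin 3 :=
  if Even n then (if b then 2 else 1) else 0

theorem parityColour_succ_ne (b b' : Bool) (n : ℕ) :
    parityColour b (n + 1) ≠ parityColour b' n := by
  unfold parityColour
  by_cases h : Even n <;> cases b <;> cases b' <;> simp [h, Nat.even_add_one]

theorem parityColour_two_ne (b : Bool) (n : ℕ) : parityColour b 2 ≠ parityColour (!b) n := by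
  unfold parityColour
  by_cases h : Even n <;> cases b <;> simp [h]

theorem eq_two_mul_or_add_eq_two_mul_of_dvd {t i j : ℕ} (hi : i < t) (hj : j < t)
    (h : (t : ℤ) ∣ j - 2 * i) : j = 2 * i ∨ j + t = 2 * i := by
  obtain ⟨c, hc⟩ := h
  have hc0 : c < 1 := by nlinarith
  have hc1 : -2 < c := by nlinarith
  obtain rfl | rfl : c = 0 ∨ c = -1 := by omega
  all_goals omega

/-- For `2 * i < t`, `doublingsToReach t i - 1` is the length of the leading run of zeros in the
binary expansion of `i / t`; for `t ≤ 2 * i`, the expansion of `(t - i) / t` is the complement. -/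
def doublingColour (t i : ℕ) : Fin 3 :=
  if t ≤ 2 * i then parityColour true (doublingsToReach t (t - i))
  else parityColour false (doublingsToReach t i)

theorem doublingColour_ne_two_mul {t i : ℕ} (hi : 0 < i) (h2i : 2 * i < t) :
    doublingColour t i ≠ doublingColour t (2 * i) := by
  have hstep := doublingsToReach_eq_succ hi (by omega : i < t)
  unfold doublingColour
  rw [if_neg (by omega)]
  split_ifs with h4i
  · rw [hstep, doublingsToReach_eq_one (by omega) h2i (by omega)]
    exact parityColour_two_ne false _
  · rw [hstep]
    exact parityColour_succ_ne _ _ _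

theorem doublingColour_ne_of_add_eq_two_mul {t i j : ℕ} (hj : 0 < j) (hi : i < t)
    (hij : j + t = 2 * i) : doublingColour t i ≠ doublingColour t j := by
  have hstep : doublingsToReach t (t - i) = doublingsToReach t (t - j) + 1 := by
    rw [doublingsToReach_eq_succ (by omega) (by omega), show 2 * (t - i) = t - j by omega]
  unfold doublingColour
  rw [if_pos (by omega)]
  split_ifs with h2j
  · rw [hstep]
    exact parityColour_succ_ne _ _ _
  · rw [hstep, doublingsToReach_eq_one (by omega) (by omega) (by omega)]
    exact parityColour_two_ne true _

theorem doubling_three_colouring_general (t : ℕ) :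
    ∃ ν : ℕ → Fin 3,
      ∀ i j : ℕ, 1 ≤ i → i < t → 1 ≤ j → j < t →
        (t : ℤ) ∣ ((j : ℤ) - 2 * (i : ℤ)) → ν i ≠ ν j := by
  refine ⟨doublingColour t, fun i j hi hit hj hjt hdvd => ?_⟩
  obtain rfl | hij := eq_two_mul_or_add_eq_two_mul_of_dvd hit hjt hdvd
  · exact doublingColour_ne_two_mul hi hjt
  · exact doublingColour_ne_of_add_eq_two_mul hj hit hij

/-- For every integer `t ≥ 2` there is a 3-colouring `ν` of `{1, …, t−1}` such that
whenever `i, j ∈ {1, …, t−1}` and `j ≡ 2i (mod t)`, one has `ν(i) ≠ ν(j)`. -/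
theorem doubling_three_colouring (t : ℕ) (ht : 2 ≤ t) :
    ∃ ν : ℕ → Fin 3,
      ∀ i j : ℕ, 1 ≤ i → i < t → 1 ≤ j → j < t →
        (t : ℤ) ∣ ((j : ℤ) - 2 * (i : ℤ)) → ν i ≠ ν j :=
  doubling_three_colouring_general t
end

section
/- Let C be a central subset of the positive integers ℕ. Then there exist m, K ∈ ℕ such that for every integer k ≥ K, one has m·ℤ ⊆ C − kC, where kC denotes the k-fold sumset C + C + ⋯ + C (k times), C − kC = {a − b : a ∈ C, b ∈ kC} ⊆ ℤ, and m·ℤ = {m·n : n ∈ ℤ}. -/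
/-- The sum `p + q` of two ultrafilters: `A ∈ p + q` if and only if
`{x | {y | x + y ∈ A} ∈ q} ∈ p`. -/
def uadd {S : Type} [Add S] (p q : Ultrafilter S) : Ultrafilter S :=
  p.bind fun x => q.map (x + ·)

/-- A two-sided ideal of the space of ultrafilters with the operation `uadd`. -/
def IsTwoSidedIdeal {S : Type} [Add S] (I : Set (Ultrafilter S)) : Prop :=
  I.Nonempty ∧ ∀ p ∈ I, ∀ q : Ultrafilter S, uadd p q ∈ I ∧ uadd q p ∈ I

/-- A minimal idempotent ultrafilter: an idempotent belonging to every two-sided ideal. -/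
def MinimalIdempotent {S : Type} [Add S] (p : Ultrafilter S) : Prop :=
  uadd p p = p ∧ ∀ I : Set (Ultrafilter S), IsTwoSidedIdeal I → p ∈ I

/-- A set is central if it belongs to some minimal idempotent ultrafilter. -/
def IsCentral {S : Type} [Add S] (C : Set S) : Prop :=
  ∃ p : Ultrafilter S, MinimalIdempotent p ∧ C ∈ p

/-- The `k`-fold sumset `S + S + ⋯ + S` (`k` times). -/
def kFoldSum {G : Type} [AddCommMonoid G] (S : Set G) (k : ℕ) : Set G :=
  {z | ∃ f : Fin k → G, (∀ i, f i ∈ S) ∧ ∑ i, f i = z}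

/-!
Central sets are piecewise syndetic, since the ultrafilters all of whose members are piecewise
syndetic form a two-sided ideal. A piecewise syndetic `C` with gap bound `d` has differences
`α - w` in every window `[L, L + d]`. Let `c₀ = min C` and `g` the gcd of `C - c₀`; as
idempotents contain `gℕ`, all of `C` lies in `gℕ`. The additive closure of `C - c₀` contains
every large multiple of `g`, and since `0 ∈ C - c₀`, a fixed window of such multiples `n`
satisfies `k c₀ + n ∈ kC` for all large `k`. Then `g z = α - (w + (k - 1) c₀ + n)` for suitable
`α, w ∈ C` and `n` in that window.
-/

open Pointwise

theorem kFoldSum_eq_nsmul {G : Type} [AddCommMonoid G] (S : Set G) (k : ℕ) :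
    kFoldSum S k = k • S := by
  ext z
  simp only [kFoldSum, Set.mem_ofPred_eq, Set.mem_nsmul, List.sum_ofFn]
  constructor
  · rintro ⟨f, hf, rfl⟩
    exact ⟨fun i => ⟨f i, hf i⟩, rfl⟩
  · rintro ⟨f, rfl⟩
    exact ⟨fun i => f i, fun i => (f i).2, rfl⟩

theorem natCast_mem_kFoldSum_of_mem_nsmul {S : Set ℕ} {k b : ℕ} (hb : b ∈ k • S) :
    (b : ℤ) ∈ kFoldSum ((Nat.cast : ℕ → ℤ) '' S) k := by
  rw [kFoldSum_eq_nsmul]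
  exact Set.image_nsmul (Nat.castAddMonoidHom ℤ) S k ▸ ⟨b, hb, rfl⟩

theorem mem_uadd {S : Type} [Add S] {p q : Ultrafilter S} {A : Set S} :
    A ∈ uadd p q ↔ {x | {y | x + y ∈ A} ∈ q} ∈ p :=
  Iff.rfl

theorem map_uadd {S T : Type} [Add S] [Add T] (f : S →ₙ+ T) (p q : Ultrafilter S) :
    (uadd p q).map f = uadd (p.map f) (q.map f) :=
  Ultrafilter.ext fun A => by
    simp only [Ultrafilter.mem_map, mem_uadd, Set.preimage_ofPred_eq, Set.mem_preimage, map_add]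

theorem uadd_pure {S : Type} [Add S] (a b : S) : uadd (pure a) (pure b) = pure (a + b) :=
  Ultrafilter.ext fun A => by simp [mem_uadd]

theorem preimage_zero_mem_of_uadd_self {S G : Type} [Add S] [AddGroup G] [Finite G]
    (f : S →ₙ+ G) {p : Ultrafilter S} (hp : uadd p p = p) : f ⁻¹' {0} ∈ p := by
  obtain ⟨r, hr⟩ := (p.map f).eq_pure_of_finite
  have hrr : r + r = r := by
    have := congrArg (Ultrafilter.map f) hp
    rwa [map_uadd, hr, uadd_pure, Ultrafilter.pure_injective.eq_iff] at this
  rw [← Ultrafilter.mem_map, hr, Ultrafilter.mem_pure, Set.mem_singleton_iff]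
  simpa using hrr

theorem setOf_dvd_mem_of_uadd_self {p : Ultrafilter ℕ} (hp : uadd p p = p) {g : ℕ} (hg : g ≠ 0) :
    {n | g ∣ n} ∈ p := by
  have : NeZero g := ⟨hg⟩
  convert preimage_zero_mem_of_uadd_self (Nat.castAddMonoidHom (ZMod g)).toAddHom hp using 1
  ext n
  simp [ZMod.natCast_eq_zero_iff]

-- Equivalently, `⋃ i ≤ d, (A - i)` is thick, the usual form of the definition.
def IsPiecewiseSyndeticWith (A : Set ℕ) (d : ℕ) : Prop :=
  ∀ N, ∃ a, ∀ t, a ≤ t → t ≤ a + N → ∃ s ∈ A, t ≤ s ∧ s ≤ t + d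

def IsPiecewiseSyndetic (A : Set ℕ) : Prop :=
  ∃ d, IsPiecewiseSyndeticWith A d

theorem IsPiecewiseSyndetic.mono {A B : Set ℕ} (hA : IsPiecewiseSyndetic A) (hAB : A ⊆ B) :
    IsPiecewiseSyndetic B := by
  obtain ⟨d, hd⟩ := hA
  refine ⟨d, fun N => ?_⟩
  obtain ⟨a, ha⟩ := hd N
  refine ⟨a, fun t h₁ h₂ => ?_⟩
  obtain ⟨s, hs, hts⟩ := ha t h₁ h₂
  exact ⟨s, hAB hs, hts⟩

theorem not_isPiecewiseSyndetic_empty : ¬ IsPiecewiseSyndetic ∅ := by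
  rintro ⟨d, hd⟩
  obtain ⟨a, ha⟩ := hd 0
  obtain ⟨s, hs, -⟩ := ha a le_rfl (Nat.le_add_right _ _)
  exact hs

theorem isPiecewiseSyndetic_univ : IsPiecewiseSyndetic Set.univ :=
  ⟨0, fun _ => ⟨0, fun t _ _ => ⟨t, trivial, le_rfl, le_rfl⟩⟩⟩

-- Every window of length `N` contains a `t` with `[t, t + d]` disjoint from `B`, and `A` meets
-- `[t, t + d]`.
theorem IsPiecewiseSyndetic.diff {A B : Set ℕ} (hA : IsPiecewiseSyndetic A)
    (hB : ¬ IsPiecewiseSyndetic B) : IsPiecewiseSyndetic (A \ B) := by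
  obtain ⟨d, hd⟩ := hA
  simp only [IsPiecewiseSyndetic, IsPiecewiseSyndeticWith] at hB
  push Not at hB
  obtain ⟨N, hN⟩ := hB d
  refine ⟨N + d, fun M => ?_⟩
  obtain ⟨a, ha⟩ := hd (M + N)
  refine ⟨a, fun t₀ h₁ h₂ => ?_⟩
  obtain ⟨t, ht₁, ht₂, hgap⟩ := hN t₀
  obtain ⟨s, hs, hts⟩ := ha t (by omega) (by omega)
  exact ⟨s, ⟨hs, fun hsB => (hgap s hsB hts.1).not_ge hts.2⟩, by omega, by omega⟩

theorem IsPiecewiseSyndetic.union {A B : Set ℕ} (h : IsPiecewiseSyndetic (A ∪ B)) :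
    IsPiecewiseSyndetic A ∨ IsPiecewiseSyndetic B :=
  or_iff_not_imp_left.2 fun hA => (h.diff hA).mono fun _ hx => hx.1.resolve_left hx.2

theorem exists_ultrafilter_forall_isPiecewiseSyndetic :
    ∃ u : Ultrafilter ℕ, ∀ A ∈ u, IsPiecewiseSyndetic A := by
  let f : Filter ℕ := .comk (¬ IsPiecewiseSyndetic ·) not_isPiecewiseSyndetic_empty
    (fun _ ht _ hst hs => ht (hs.mono hst)) (fun _ hs _ ht hst => hst.union.elim hs ht)
  have : f.NeBot := ⟨fun h => by
    have := Filter.empty_mem_iff_bot.2 h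
    rw [Filter.mem_comk, Set.compl_empty] at this
    exact this isPiecewiseSyndetic_univ⟩
  obtain ⟨u, hu⟩ := f.exists_ultrafilter_le
  refine ⟨u, fun A hA => by_contra fun hnot => ?_⟩
  have hAc : Aᶜ ∈ u := hu (by rwa [Filter.mem_comk, compl_compl])
  exact u.compl_notMem_iff.2 hA hAc

theorem IsPiecewiseSyndetic.of_preimage_add {A : Set ℕ} {x : ℕ}
    (h : IsPiecewiseSyndetic ((x + ·) ⁻¹' A)) : IsPiecewiseSyndetic A := by
  obtain ⟨d, hd⟩ := h
  refine ⟨d, fun N => ?_⟩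
  obtain ⟨a, ha⟩ := hd N
  refine ⟨x + a, fun t h₁ h₂ => ?_⟩
  obtain ⟨s, hs, hts⟩ := ha (t - x) (by omega) (by omega)
  exact ⟨x + s, hs, by omega, by omega⟩

-- The finitely many elements of `{x | {y | x + y ∈ A} ∈ r}` in one long interval have a common
-- `y` translating them into `A`.
theorem isPiecewiseSyndetic_of_mem_uadd_left {q r : Ultrafilter ℕ}
    (hq : ∀ A ∈ q, IsPiecewiseSyndetic A) {A : Set ℕ} (hA : A ∈ uadd q r) :
    IsPiecewiseSyndetic A := by
  obtain ⟨d, hd⟩ := hq _ (mem_uadd.1 hA)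
  refine ⟨d, fun N => ?_⟩
  obtain ⟨a, ha⟩ := hd (N + d)
  set B := {x | {y | x + y ∈ A} ∈ r} ∩ Set.Icc a (a + N + d)
  have hB : (⋂ x ∈ B, {y | x + y ∈ A}) ∈ r :=
    (Filter.biInter_mem ((Set.finite_Icc _ _).subset Set.inter_subset_right)).2 fun _ hx => hx.1
  obtain ⟨y, hy⟩ := Ultrafilter.nonempty_of_mem hB
  rw [Set.mem_iInter₂] at hy
  refine ⟨a + y, fun t h₁ h₂ => ?_⟩
  obtain ⟨s, hs, hts⟩ := ha (t - y) (by omega) (by omega)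
  exact ⟨s + y, hy s ⟨hs, by omega, by omega⟩, by omega, by omega⟩

theorem isPiecewiseSyndetic_of_mem_uadd_right {q r : Ultrafilter ℕ}
    (hq : ∀ A ∈ q, IsPiecewiseSyndetic A) {A : Set ℕ} (hA : A ∈ uadd r q) :
    IsPiecewiseSyndetic A :=
  have ⟨_, hx⟩ := Ultrafilter.nonempty_of_mem (mem_uadd.1 hA)
  (hq _ hx).of_preimage_add

theorem isTwoSidedIdeal_setOf_forall_isPiecewiseSyndetic :
    IsTwoSidedIdeal {q : Ultrafilter ℕ | ∀ A ∈ q, IsPiecewiseSyndetic A} :=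
  ⟨exists_ultrafilter_forall_isPiecewiseSyndetic, fun _ hq _ =>
    ⟨fun _ => isPiecewiseSyndetic_of_mem_uadd_left hq,
      fun _ => isPiecewiseSyndetic_of_mem_uadd_right hq⟩⟩

theorem MinimalIdempotent.isPiecewiseSyndetic {p : Ultrafilter ℕ} (hp : MinimalIdempotent p)
    {A : Set ℕ} (hA : A ∈ p) : IsPiecewiseSyndetic A :=
  hp.2 _ isTwoSidedIdeal_setOf_forall_isPiecewiseSyndetic A hA

theorem IsPiecewiseSyndeticWith.exists_gt {A : Set ℕ} {d : ℕ} (h : IsPiecewiseSyndeticWith A d)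
    (x : ℕ) : ∃ y ∈ A, x < y := by
  obtain ⟨a, ha⟩ := h (x + 1)
  obtain ⟨y, hy, hxy⟩ := ha (a + x + 1) (by omega) (by omega)
  exact ⟨y, hy, by omega⟩

theorem IsPiecewiseSyndeticWith.exists_sub_mem_Icc {A : Set ℕ} {d : ℕ}
    (h : IsPiecewiseSyndeticWith A d) (L : ℤ) :
    ∃ α ∈ A, ∃ w ∈ A, L ≤ (α : ℤ) - w ∧ (α : ℤ) - w ≤ L + d := by
  obtain ⟨P, M, rfl⟩ : ∃ P M : ℕ, L = P - M := ⟨L.toNat, (-L).toNat, by omega⟩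
  obtain ⟨a, ha⟩ := h (P + M + d)
  obtain ⟨w, hw, hw₁, hw₂⟩ := ha (a + M) (by omega) (by omega)
  obtain ⟨α, hα, hα₁, hα₂⟩ := ha (w + P - M) (by omega) (by omega)
  exact ⟨α, hα, w, hw, by omega, by omega⟩

theorem exists_mem_nsmul_of_mem_closure {M : Type} [AddMonoid M] {S : Set M} {x : M}
    (hx : x ∈ AddSubmonoid.closure S) : ∃ j : ℕ, x ∈ j • S := by
  induction hx using AddSubmonoid.closure_induction with
  | mem x hx => exact ⟨1, by rwa [one_nsmul]⟩
  | zero => exact ⟨0, by rw [zero_nsmul]; rfl⟩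
  | add x y _ _ hx hy =>
    obtain ⟨i, hi⟩ := hx
    obtain ⟨j, hj⟩ := hy
    exact ⟨i + j, by rw [add_nsmul]; exact Set.add_mem_add hi hj⟩

theorem add_mem_nsmul_of_mem_nsmul_preimage {C : Set ℕ} {c₀ : ℕ} {j n : ℕ}
    (hn : n ∈ j • ((c₀ + ·) ⁻¹' C)) : j * c₀ + n ∈ j • C := by
  induction j generalizing n with
  | zero =>
    rw [zero_nsmul, Set.mem_zero] at hn
    simp [hn]
  | succ j ih =>
    rw [succ_nsmul] at hn ⊢
    obtain ⟨a, ha, b, hb, rfl⟩ := hn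
    have : (j + 1) * c₀ + (a + b) = (j * c₀ + a) + (c₀ + b) := by ring
    exact this ▸ Set.add_mem_add (ih ha) hb

-- The window is finite, so a single `K` bounds the number of summands from `C - c₀` needed for
-- each of its members; padding with the summand `0` reaches every `k ≥ K`.
theorem exists_add_mem_nsmul {C : Set ℕ} {c₀ : ℕ} (hc₀ : c₀ ∈ C) (D : ℕ) :
    ∃ F K : ℕ, ∀ k ≥ K, ∀ n, F ≤ n → n ≤ F + D →
      Nat.setGcd ((c₀ + ·) ⁻¹' C) ∣ n → k * c₀ + n ∈ k • C := by
  set E := (c₀ + ·) ⁻¹' C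
  have hE : 0 ∈ E := by simpa [E] using hc₀
  obtain ⟨F, hF⟩ := Nat.exists_mem_closure_of_ge E
  have hj (n : ℕ) (h : F ≤ n ∧ Nat.setGcd E ∣ n) : ∃ j : ℕ, n ∈ j • E :=
    exists_mem_nsmul_of_mem_closure (hF n h.1 h.2)
  choose! j hj using hj
  refine ⟨F, (Finset.Icc F (F + D)).sup j, fun k hk n h₁ h₂ hg => ?_⟩
  have hjk : j n ≤ k := (Finset.le_sup (f := j) (Finset.mem_Icc.2 ⟨h₁, h₂⟩)).trans hk
  exact add_mem_nsmul_of_mem_nsmul_preimage (Set.nsmul_subset_nsmul_right hE hjk (hj n ⟨h₁, hg⟩))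

theorem setGcd_preimage_add_dvd_sub {C : Set ℕ} {c₀ c : ℕ} (hc : c ∈ C) (h : c₀ ≤ c) :
    Nat.setGcd ((c₀ + ·) ⁻¹' C) ∣ c - c₀ :=
  Nat.setGcd_dvd_of_mem (by simpa [Nat.add_sub_cancel' h] using hc)

theorem setGcd_preimage_add_ne_zero {C : Set ℕ} {c₀ c : ℕ} (hc : c ∈ C) (h : c₀ < c) :
    Nat.setGcd ((c₀ + ·) ⁻¹' C) ≠ 0 := fun h0 => by
  have := setGcd_preimage_add_dvd_sub hc h.le
  rw [h0, zero_dvd_iff] at this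
  omega

-- `C` lies in one residue class modulo `g`, and the idempotent `p` contains `gℕ`.
theorem setGcd_preimage_add_dvd_of_uadd_self {p : Ultrafilter ℕ} (hp : uadd p p = p)
    {C : Set ℕ} (hC : C ∈ p) {c₀ : ℕ} (hc₀ : ∀ c ∈ C, c₀ ≤ c)
    (hg : Nat.setGcd ((c₀ + ·) ⁻¹' C) ≠ 0) {c : ℕ} (hc : c ∈ C) :
    Nat.setGcd ((c₀ + ·) ⁻¹' C) ∣ c := by
  obtain ⟨c', hc', hgc'⟩ :=
    Ultrafilter.nonempty_of_mem (p.inter_mem hC (setOf_dvd_mem_of_uadd_self hp hg))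
  have hgc₀ : Nat.setGcd ((c₀ + ·) ⁻¹' C) ∣ c₀ := by
    simpa [Nat.sub_sub_self (hc₀ c' hc')] using
      Nat.dvd_sub hgc' (setGcd_preimage_add_dvd_sub hc' (hc₀ c' hc'))
  simpa [Nat.add_sub_cancel' (hc₀ c hc)] using
    dvd_add hgc₀ (setGcd_preimage_add_dvd_sub hc (hc₀ c hc))

theorem central_mZ_subset_C_sub_kC_general (C : Set ℕ) (hC : IsCentral C) :
    ∃ m K : ℕ, 0 < m ∧ 0 < K ∧
      ∀ k : ℕ, K ≤ k →
        ∀ z : ℤ, ∃ a ∈ C, ∃ b ∈ kFoldSum ((Nat.cast : ℕ → ℤ) '' C) k,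
          (m : ℤ) * z = (a : ℤ) - b := by
  obtain ⟨p, hp, hCp⟩ := hC
  obtain ⟨d, hd⟩ := hp.isPiecewiseSyndetic hCp
  obtain ⟨c₀, hc₀, hc₀_le⟩ : ∃ c₀ ∈ C, ∀ c ∈ C, c₀ ≤ c :=
    have ⟨c, hc, _⟩ := hd.exists_gt 0
    ⟨sInf C, Nat.sInf_mem ⟨c, hc⟩, fun _ => Nat.sInf_le⟩
  set g := Nat.setGcd ((c₀ + ·) ⁻¹' C)
  have hg : g ≠ 0 :=
    have ⟨_, hc, hlt⟩ := hd.exists_gt c₀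
    setGcd_preimage_add_ne_zero hc hlt
  have hg_dvd (c : ℕ) (hc : c ∈ C) : (g : ℤ) ∣ c :=
    Int.natCast_dvd_natCast.2 (setGcd_preimage_add_dvd_of_uadd_self hp.1 hCp hc₀_le hg hc)
  obtain ⟨F, K, hFK⟩ := exists_add_mem_nsmul hc₀ d
  refine ⟨g, K + 1, Nat.pos_of_ne_zero hg, K.succ_pos, fun k hk z => ?_⟩
  obtain ⟨j, rfl⟩ : ∃ j, k = j + 1 := ⟨k - 1, by omega⟩
  obtain ⟨α, hα, w, hw, h₁, h₂⟩ := hd.exists_sub_mem_Icc (g * z + j * c₀ + F)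
  set n := ((α : ℤ) - w - g * z - j * c₀).toNat
  have hn : (n : ℤ) = α - w - g * z - j * c₀ := Int.toNat_of_nonneg (by linarith)
  have hgn : g ∣ n := Int.natCast_dvd_natCast.1 <| hn ▸
    (((hg_dvd α hα).sub (hg_dvd w hw)).sub (dvd_mul_right _ z)).sub ((hg_dvd c₀ hc₀).mul_left _)
  have hb : w + (j * c₀ + n) ∈ (j + 1) • C :=
    succ_nsmul' C j ▸ Set.add_mem_add hw (hFK j (by omega) n (by omega) (by omega) hgn)
  exact ⟨α, hα, _, natCast_mem_kFoldSum_of_mem_nsmul hb, by push_cast; linarith⟩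

/-- If `C` is a central subset of the positive integers, then there are `m, K ∈ ℕ`
such that for every `k ≥ K` one has `m·ℤ ⊆ C − kC` (differences taken in `ℤ`). -/
theorem central_mZ_subset_C_sub_kC (C : Set ℕ) (hpos : ∀ n ∈ C, 0 < n)
    (hC : IsCentral C) :
    ∃ m K : ℕ, 0 < m ∧ 0 < K ∧
      ∀ k : ℕ, K ≤ k →
        ∀ z : ℤ, ∃ a ∈ C, ∃ b ∈ kFoldSum ((Nat.cast : ℕ → ℤ) '' C) k,
          (m : ℤ) * z = (a : ℤ) - b :=
  central_mZ_subset_C_sub_kC_general C hC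
end

section
/- Let (G, +) be a commutative group and let A be a piecewise syndetic subset of G. Then A − A = {a − b : a, b ∈ A} is syndetic in G. -/
/-- A subset `A` of a commutative group `G` is piecewise syndetic if there is a finite
nonempty `H ⊆ G` such that for every finite nonempty `F ⊆ G` there is `x ∈ G` with
`F + x ⊆ ⋃_{t ∈ H} (−t + A)`. -/
def PiecewiseSyndetic {G : Type} [AddCommGroup G] (A : Set G) : Prop :=
  ∃ H : Finset G, H.Nonempty ∧
    ∀ F : Finset G, F.Nonempty → ∃ x : G, ∀ f ∈ F, ∃ t ∈ H, t + (f + x) ∈ A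

/-- A subset `B` of a commutative group `G` is syndetic if there is a finite nonempty
`L ⊆ G` with `G = ⋃_{t ∈ L} (−t + B)`. -/
def Syndetic {G : Type} [AddCommGroup G] (B : Set G) : Prop :=
  ∃ L : Finset G, L.Nonempty ∧ ∀ g : G, ∃ t ∈ L, t + g ∈ B

/-!
Apply piecewise syndeticity to `F = {0, g}`: a common translate `x` puts `x` into `−t₁ + A`
and `g + x` into `−t₂ + A` with `t₁, t₂ ∈ H`, so `(t₂ − t₁) + g ∈ A − A`. Hence `L = H − H`
witnesses syndeticity of `A − A`.
-/

open Pointwise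

theorem PiecewiseSyndetic.exists_translate_pair {G : Type} [AddCommGroup G] {A : Set G}
    (hA : PiecewiseSyndetic A) :
    ∃ H : Finset G, H.Nonempty ∧
      ∀ g : G, ∃ x : G, ∃ t₁ ∈ H, ∃ t₂ ∈ H, t₁ + x ∈ A ∧ t₂ + (g + x) ∈ A := by
  classical
  obtain ⟨H, hHne, hH⟩ := hA
  refine ⟨H, hHne, fun g => ?_⟩
  obtain ⟨x, hx⟩ := hH {0, g} (Finset.insert_nonempty _ _)
  obtain ⟨t₁, ht₁, h₀⟩ := hx 0 (Finset.mem_insert_self _ _)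
  obtain ⟨t₂, ht₂, hg⟩ := hx g (by simp)
  exact ⟨x, t₁, ht₁, t₂, ht₂, by rwa [zero_add] at h₀, hg⟩

/-- If `A` is a piecewise syndetic subset of a commutative group `G`, then
`A − A = {a − b : a, b ∈ A}` is syndetic in `G`. -/
theorem piecewiseSyndetic_sub_self_syndetic {G : Type} [AddCommGroup G] (A : Set G)
    (hA : PiecewiseSyndetic A) :
    Syndetic {z : G | ∃ a ∈ A, ∃ b ∈ A, z = a - b} := by
  classical
  obtain ⟨H, hHne, hH⟩ := hA.exists_translate_pair
  refine ⟨H - H, hHne.sub hHne, fun g => ?_⟩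
  obtain ⟨x, t₁, ht₁, t₂, ht₂, h₀, hg⟩ := hH g
  exact ⟨t₂ - t₁, Finset.sub_mem_sub ht₂ ht₁, _, hg, _, h₀, by abel⟩
end
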